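/- (Deterministic 2FleeSIR final-state characterization on the Diamond.) In the deterministic 2FleeSIR process (τ = 1, γ = 0) on the Diamond network starting from I_0 = {a}: at t=1 both b and c are infected; at the start of t=1's round, nodes d, e, f each observe 2 infected neighbors and sever all ties; hence the process terminates with exactly R = {a,b,c} infected and d, e, f never infected. In contrast, deterministic SIR (τ = 1, γ = 0) from the same start infects all 6 nodes. -/

import Mathlib

open Finset

/-- A full assignment of random coins for the epidemic: initial-infection coins,
removal coins, and per-(ordered-)edge transmission coins. -/
abbrev Coins (V : Type*) := (V → Bool) × (V → Bool) × (V → V → Bool)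

variable {V : Type*} [Fintype V] [DecidableEq V]

/-- Probability weight of a coin outcome `ω` under induction probabilities `σ`,
removal probabilities `γ` and transmission probabilities `τ`. -/
def coinWeight (σ γ : V → ℝ) (τ : V → V → ℝ) (ω : Coins V) : ℝ :=
  (∏ v, if ω.1 v then σ v else 1 - σ v) *
  (∏ v, if ω.2.1 v then γ v else 1 - γ v) *
  ∏ u, ∏ v, if ω.2.2 u v then τ u v else 1 - τ u v

/-- One step of the discrete-time SIR process: state is `(I, R)`.
An infected node, unless removed (removal coin `true`), transmits to each
susceptible out-neighbour whose transmission coin is `true`; then it recovers. -/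
def sirStep (A : V → V → Bool) (ω : Coins V) (p : Finset V × Finset V) :
    Finset V × Finset V :=
  (univ.filter (fun v => v ∉ p.1 ∧ v ∉ p.2 ∧
      ∃ u ∈ p.1, ω.2.1 u = false ∧ A u v = true ∧ ω.2.2 u v = true),
   p.2 ∪ p.1)

/-- The discrete-time SIR process `(I_t, R_t)`; susceptibles are the complement. -/
def sirProc (A : V → V → Bool) (ω : Coins V) : ℕ → Finset V × Finset V
  | 0 => (univ.filter (fun v => ω.1 v = true), ∅)
  | t + 1 => sirStep A ω (sirProc A ω t)

/-- The set of ever-infected nodes (the epidemic is stationary by time `n = |V|`). -/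
def everInf (A : V → V → Bool) (ω : Coins V) : Finset V :=
  (sirProc A ω (Fintype.card V)).1 ∪ (sirProc A ω (Fintype.card V)).2

/-- The mean final extent `E(|R_n|)` of the SIR epidemic. -/
def meanExtent (A : V → V → Bool) (σ γ : V → ℝ) (τ : V → V → ℝ) : ℝ :=
  ∑ ω : Coins V, coinWeight σ γ τ ω * ((everInf A ω).card : ℝ)

/-- The probability that node `u` is ultimately infected. -/
def probInf (A : V → V → Bool) (σ γ : V → ℝ) (τ : V → V → ℝ) (u : V) : ℝ :=
  ∑ ω : Coins V, coinWeight σ γ τ ω * (if u ∈ everInf A ω then 1 else 0)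

variable {V : Type*} [Fintype V] [DecidableEq V]

/-- One step of 2FleeSIR: the state is `(I, R, Sev)`, where `Sev` is the set of
nodes that have (permanently) severed all their ties.  First (step 0) every
susceptible node observing at least `2` infected in-neighbours severs all its ties;
then infected nodes transmit as in SIR, except that no transmission can reach a
severed node; then infected nodes recover. -/
def fleeStep (A : V → V → Bool) (ω : Coins V) (p : Finset V × Finset V × Finset V) :
    Finset V × Finset V × Finset V :=
  let Sev : Finset V := p.2.2 ∪ Finset.univ.filter (fun v => v ∉ p.1 ∧ v ∉ p.2.1 ∧
      2 ≤ (Finset.univ.filter (fun u => A u v = true ∧ u ∈ p.1)).card)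
  (Finset.univ.filter (fun v => v ∉ p.1 ∧ v ∉ p.2.1 ∧ v ∉ Sev ∧
      ∃ u ∈ p.1, ω.2.1 u = false ∧ A u v = true ∧ ω.2.2 u v = true),
   p.2.1 ∪ p.1, Sev)

/-- The 2FleeSIR process `(I_t, R_t, Sev_t)`. -/
def fleeProc (A : V → V → Bool) (ω : Coins V) : ℕ → Finset V × Finset V × Finset V
  | 0 => (Finset.univ.filter (fun v => ω.1 v = true), ∅, ∅)
  | t + 1 => fleeStep A ω (fleeProc A ω t)

/-- The ever-infected set of the 2FleeSIR epidemic. -/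
def everFlee (A : V → V → Bool) (ω : Coins V) : Finset V :=
  (fleeProc A ω (Fintype.card V)).1 ∪ (fleeProc A ω (Fintype.card V)).2.1

/-- The mean final extent of the 2FleeSIR epidemic. -/
def fleeMeanExtent (A : V → V → Bool) (σ γ : V → ℝ) (τ : V → V → ℝ) : ℝ :=
  ∑ ω : Coins V, coinWeight σ γ τ ω * ((everFlee A ω).card : ℝ)

/-- The six nodes of the Diamond network. -/
inductive Dia | a | b | c | d | e | f
deriving DecidableEq

instance : Fintype Dia :=
  ⟨{Dia.a, Dia.b, Dia.c, Dia.d, Dia.e, Dia.f}, fun x => by cases x <;> decide⟩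

/-- The Diamond network (undirected, encoded as a symmetric directed graph):
edges `a–b`, `a–c`, `b–d`, `b–e`, `b–f`, `c–d`, `c–e`, `c–f`. -/
def diaAdj : Dia → Dia → Bool := fun x y =>
  decide ((x, y) ∈ ([(.a,.b),(.b,.a),(.a,.c),(.c,.a),(.b,.d),(.d,.b),(.b,.e),(.e,.b),
    (.b,.f),(.f,.b),(.c,.d),(.d,.c),(.c,.e),(.e,.c),(.c,.f),(.f,.c)] : List (Dia × Dia)))

/-!
With `γ ≡ 0` and `τ ≡ 1` the infection front moves one layer per round. From `a` it reaches
`b` and `c`; each of `d, e, f` is adjacent to both, so in the 2FleeSIR round that follows they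
all see two infected neighbours and sever before `b` and `c` can transmit, and the epidemic dies
out with `{a, b, c}` recovered. Plain SIR instead lets `b, c` infect `d, e, f` in that round.
Once no node is infected, both processes are frozen, so the state at time `|V| = 6` is the
state at extinction.
-/

section Extinction

variable {V : Type*} [Fintype V] [DecidableEq V] (A : V → V → Bool) (ω : Coins V)

theorem sirStep_of_fst_eq_empty (R : Finset V) : sirStep A ω (∅, R) = (∅, R) := by
  simp [sirStep]

theorem fleeStep_of_fst_eq_empty (R S : Finset V) : fleeStep A ω (∅, R, S) = (∅, R, S) := by
  simp [fleeStep]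

theorem sirProc_eq_of_fst_eq_empty {t s : ℕ} (h : (sirProc A ω t).1 = ∅) (hts : t ≤ s) :
    sirProc A ω s = sirProc A ω t := by
  induction s, hts using Nat.le_induction with
  | base => rfl
  | succ s _ ih =>
    rw [sirProc, ih, ← Prod.mk.eta (p := sirProc A ω t), h, sirStep_of_fst_eq_empty]

theorem fleeProc_eq_of_fst_eq_empty {t s : ℕ} (h : (fleeProc A ω t).1 = ∅) (hts : t ≤ s) :
    fleeProc A ω s = fleeProc A ω t := by
  induction s, hts using Nat.le_induction with
  | base => rfl
  | succ s _ ih =>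
    rw [fleeProc, ih, ← Prod.mk.eta (p := fleeProc A ω t), ← Prod.mk.eta (p := (fleeProc A ω t).2),
      h, fleeStep_of_fst_eq_empty]

end Extinction

section Diamond

open Dia

/-- The deterministic coins: `I₀ = {a}`, `γ ≡ 0`, `τ ≡ 1`. -/
def diaCoins : Coins Dia := (fun v => decide (v = a), fun _ => false, fun _ _ => true)

theorem fleeProc_diaCoins_one : fleeProc diaAdj diaCoins 1 = ({b, c}, {a}, ∅) := by decide

theorem fleeProc_diaCoins_two :
    fleeProc diaAdj diaCoins 2 = (∅, {a, b, c}, {d, e, f}) := by decide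

theorem sirProc_diaCoins_three : sirProc diaAdj diaCoins 3 = (∅, univ) := by decide

theorem everFlee_diaCoins : everFlee diaAdj diaCoins = {a, b, c} := by
  have hstable := fleeProc_eq_of_fst_eq_empty diaAdj diaCoins
    (by rw [fleeProc_diaCoins_two]) (show 2 ≤ Fintype.card Dia by decide)
  simp [everFlee, hstable, fleeProc_diaCoins_two]

theorem everInf_diaCoins : everInf diaAdj diaCoins = univ := by
  have hstable := sirProc_eq_of_fst_eq_empty diaAdj diaCoins
    (by rw [sirProc_diaCoins_three]) (show 3 ≤ Fintype.card Dia by decide)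
  simp [everInf, hstable, sirProc_diaCoins_three]

end Diamond

/-- **deterministic 2FleeSIR final state on the Diamond.** With
`τ ≡ 1`, `γ ≡ 0` and `I₀ = {a}` on the Diamond network: at `t = 1` exactly `b` and
`c` are infected; at the start of the next round `d, e, f` (having 2 infected
neighbours) sever all their ties; the 2FleeSIR process ends with exactly
`{a, b, c}` ever infected, while the deterministic SIR process from the same start
infects all six nodes. -/
theorem flee_diamond_deterministic :
    ∀ ω : Coins Dia, ω.1 = (fun v => decide (v = Dia.a)) →
      ω.2.1 = (fun _ => false) → ω.2.2 = (fun _ _ => true) →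
    (fleeProc diaAdj ω 1).1 = {Dia.b, Dia.c} ∧
    (fleeProc diaAdj ω 2).2.2 = {Dia.d, Dia.e, Dia.f} ∧
    everFlee diaAdj ω = {Dia.a, Dia.b, Dia.c} ∧
    everInf diaAdj ω = Finset.univ := by
  intro ω hinit hremoval htransmit
  obtain rfl : ω = diaCoins := Prod.ext hinit (Prod.ext hremoval htransmit)
  exact ⟨by rw [fleeProc_diaCoins_one], by rw [fleeProc_diaCoins_two], everFlee_diaCoins,
    everInf_diaCoins⟩
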